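/- For every integer m ≥ 0, π/12 = √5 · ∑_{n=0}^∞ ((−1)^n/(2n+1)) · F_{(2m+1)(2n+1)} · (2(2 − √3) / (√5·F_{2m+1} + √(5·F_{2m+1}² + 4(2 − √3)²)))^{2n+1}, where the series on the right converges. -/

import Mathlib

open Real

lemma arctan_two_sub_sqrt_three : Real.arctan (2 - Real.sqrt 3) = Real.pi / 12 := by
  have h3 : Real.sqrt 3 ^ 2 = 3 := Real.sq_sqrt (by norm_num)
  have h3l : 1.5 < Real.sqrt 3 := by nlinarith [Real.sqrt_nonneg 3]
  have h3u : Real.sqrt 3 < 2 := by nlinarith [Real.sqrt_nonneg 3]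
  set t := 2 - Real.sqrt 3 with htdef
  have ht0 : 0 < t := by simp only [htdef]; linarith
  have ht1 : t < 1 := by simp only [htdef]; linarith
  have hadd := Real.arctan_add (x := t) (y := t) (by nlinarith)
  have heq : (t + t) / (1 - t * t) = (Real.sqrt 3)⁻¹ := by
    have hden : 1 - t * t > 0 := by nlinarith
    have hs : Real.sqrt 3 ≠ 0 := by positivity
    field_simp
    rw [div_eq_one_iff_eq (by nlinarith), htdef]; nlinarith
  rw [heq] at hadd
  have h6 : Real.arctan (Real.sqrt 3)⁻¹ = Real.pi / 6 := by
    rw [← one_div, ← Real.tan_pi_div_six, Real.arctan_tan] <;>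
      linarith [Real.pi_pos]
  linarith

theorem pi_div_twelve_fib_series (m : ℕ) :
    Summable
      (fun n : ℕ => (-1 : ℝ) ^ n / (2 * (n : ℝ) + 1) *
        (Nat.fib ((2 * m + 1) * (2 * n + 1)) : ℝ) *
        (2 * (2 - Real.sqrt 3) / (Real.sqrt 5 * (Nat.fib (2 * m + 1) : ℝ) +
          Real.sqrt (5 * (Nat.fib (2 * m + 1) : ℝ) ^ 2 +
            4 * (2 - Real.sqrt 3) ^ 2))) ^ (2 * n + 1)) ∧
    Real.pi / 12 = Real.sqrt 5 *
      ∑' n : ℕ, (-1 : ℝ) ^ n / (2 * (n : ℝ) + 1) *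
        (Nat.fib ((2 * m + 1) * (2 * n + 1)) : ℝ) *
        (2 * (2 - Real.sqrt 3) / (Real.sqrt 5 * (Nat.fib (2 * m + 1) : ℝ) +
          Real.sqrt (5 * (Nat.fib (2 * m + 1) : ℝ) ^ 2 +
            4 * (2 - Real.sqrt 3) ^ 2))) ^ (2 * n + 1) := by
  have h5 : Real.sqrt 5 ^ 2 = 5 := Real.sq_sqrt (by norm_num)
  have h5l : 2 < Real.sqrt 5 := by nlinarith [Real.sqrt_nonneg 5]
  have h3 : Real.sqrt 3 ^ 2 = 3 := Real.sq_sqrt (by norm_num)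
  have h3l : 1.5 < Real.sqrt 3 := by nlinarith [Real.sqrt_nonneg 3]
  have h3u : Real.sqrt 3 < 2 := by nlinarith [Real.sqrt_nonneg 3]
  set k := 2 * m + 1 with hkdef
  set F : ℝ := (Nat.fib k : ℝ) with hFdef
  have hF1 : 1 ≤ F := by
    have h : (1:ℕ) ≤ Nat.fib k := Nat.fib_pos.2 (by omega)
    rw [hFdef]
    exact_mod_cast h
  set t : ℝ := 2 - Real.sqrt 3 with htdef
  have ht0 : 0 < t := by simp only [htdef]; linarith
  have ht1 : t < 1 := by simp only [htdef]; linarith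
  set d : ℝ := Real.sqrt 5 * F with hddef
  have hd2 : 2 < d := by
    calc (2:ℝ) < Real.sqrt 5 * 1 := by linarith
    _ ≤ d := by rw [hddef]; nlinarith
  have hdsq : d ^ 2 = 5 * F ^ 2 := by rw [hddef]; nlinarith
  set s : ℝ := Real.sqrt (5 * F ^ 2 + 4 * t ^ 2) with hsdef
  have hs2 : s ^ 2 = 5 * F ^ 2 + 4 * t ^ 2 := Real.sq_sqrt (by positivity)
  have hs0 : 0 < s := Real.sqrt_pos.2 (by positivity)
  have hds0 : 0 < d + s := by linarith
  set x : ℝ := 2 * t / (d + s) with hxdef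
  have hx0 : 0 < x := by positivity
  have hxt : x < t := by
    rw [hxdef, div_lt_iff₀ hds0]; nlinarith
  have hx1 : x < 1 := lt_trans hxt ht1
  -- key algebraic identity
  have hkey : t * (1 - x ^ 2) = d * x := by
    have hexp : (d + s) ^ 2 = 2 * d * (d + s) + 4 * t ^ 2 := by nlinarith [hs2, hdsq]
    have hne : d + s ≠ 0 := ne_of_gt hds0
    rw [hxdef, div_pow]
    field_simp
    linear_combination hexp
  -- golden ratio setup
  set g : ℝ := goldenRatio with hgdef
  have hg1 : 1 < g := one_lt_goldenRatio
  have hg0 : 0 < g := by linarith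
  have hgk1 : 1 ≤ g ^ k := one_le_pow₀ hg1.le
  have hgk0 : 0 < g ^ k := by positivity
  have hkodd : Odd k := ⟨m, by omega⟩
  have hpsi : goldenConj = -g⁻¹ := by
    rw [hgdef, inv_goldenRatio, neg_neg]
  have hpsik : goldenConj ^ k = -(g ^ k)⁻¹ := by
    rw [hpsi, hkodd.neg_pow, inv_pow]
  -- Binet
  have h5ne : Real.sqrt 5 ≠ 0 := by positivity
  have hbinet : ∀ j : ℕ, Real.sqrt 5 * (Nat.fib j : ℝ) = g ^ j - goldenConj ^ j := by
    intro j
    rw [Real.coe_fib_eq, ← hgdef, mul_comm, div_mul_cancel₀ _ h5ne]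
  set u : ℝ := g ^ k * x with hudef
  set v : ℝ := x / g ^ k with hvdef
  clear_value k F t d s x g u v
  have hu0 : 0 < u := by rw [hudef]; exact mul_pos hgk0 hx0
  have hv0 : 0 < v := by rw [hvdef]; exact div_pos hx0 hgk0
  have hgkne : (g : ℝ) ^ k ≠ 0 := ne_of_gt hgk0
  have huv : u * v = x ^ 2 := by
    rw [hudef, hvdef]; field_simp
  have hd' : d = g ^ k + (g ^ k)⁻¹ := by
    have hb := hbinet k
    rw [hpsik] at hb
    rw [hddef, hFdef, hb]; ring
  have hsumuv : u + v = d * x := by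
    rw [hudef, hvdef, hd']
    field_simp
  have hvx : v ≤ x := by
    rw [hvdef]; exact div_le_self hx0.le hgk1
  have hv1 : v < 1 := lt_of_le_of_lt hvx hx1
  have htuv : u + v = t * (1 - u * v) := by rw [huv, hsumuv, hkey]
  have htuv' : u + v = t - t * (u * v) := by rw [htuv]; ring
  have hp : 0 < t * (u * v) := mul_pos ht0 (mul_pos hu0 hv0)
  have hu1 : u < 1 := by linarith
  -- arctan series
  have hA := Real.hasSum_arctan (x := u) (by rw [Real.norm_eq_abs, abs_of_pos hu0]; exact hu1)
  have hB := Real.hasSum_arctan (x := v) (by rw [Real.norm_eq_abs, abs_of_pos hv0]; exact hv1)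
  have hAB := hA.add hB
  -- arctan u + arctan v = pi/12
  have harct : Real.arctan u + Real.arctan v = Real.pi / 12 := by
    have hx2 : x ^ 2 < 1 := pow_lt_one₀ hx0.le hx1 two_ne_zero
    have huv1 : u * v < 1 := by rw [huv]; exact hx2
    rw [Real.arctan_add huv1]
    have heq : (u + v) / (1 - u * v) = t := by
      rw [htuv, huv]
      have hpos : (0:ℝ) < 1 - x ^ 2 := by linarith
      field_simp
    rw [heq, htdef]
    exact arctan_two_sub_sqrt_three
  rw [harct] at hAB
  -- identify terms
  have hterm : ∀ n : ℕ,
      Real.sqrt 5 * ((-1 : ℝ) ^ n / (2 * (n : ℝ) + 1) *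
        (Nat.fib (k * (2 * n + 1)) : ℝ) * x ^ (2 * n + 1)) =
      (-1) ^ n * u ^ (2 * n + 1) / ((2 * n + 1 : ℕ) : ℝ) +
      (-1) ^ n * v ^ (2 * n + 1) / ((2 * n + 1 : ℕ) : ℝ) := by
    intro n
    have hb := hbinet (k * (2 * n + 1))
    rw [pow_mul, pow_mul, hpsik] at hb
    have hodd : Odd (2 * n + 1) := ⟨n, by omega⟩
    rw [hodd.neg_pow] at hb
    have hxN : Real.sqrt 5 * (Nat.fib (k * (2 * n + 1)) : ℝ) * x ^ (2 * n + 1)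
        = u ^ (2 * n + 1) + v ^ (2 * n + 1) := by
      rw [hb, hudef, hvdef, mul_pow, div_pow, inv_pow]
      field_simp
      ring
    have h2n : ((2 * n + 1 : ℕ) : ℝ) = 2 * (n : ℝ) + 1 := by push_cast; ring
    rw [h2n]
    have hMne : (2 * (n : ℝ) + 1) ≠ 0 := by positivity
    field_simp
    linear_combination hxN
  have hS : HasSum (fun n : ℕ => Real.sqrt 5 * ((-1 : ℝ) ^ n / (2 * (n : ℝ) + 1) *
      (Nat.fib (k * (2 * n + 1)) : ℝ) * x ^ (2 * n + 1))) (Real.pi / 12) := by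
    exact (funext hterm : _) ▸ hAB
  constructor
  · have h2 := hS.summable.mul_left (Real.sqrt 5)⁻¹
    simpa [← mul_assoc, inv_mul_cancel₀ h5ne] using h2
  · rw [← tsum_mul_left]
    exact (hS.tsum_eq).symm
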